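/- arXiv:2507.12368 — 8 statements merged into one kernel-verified Lean document; each statement's English description precedes it below -/
import Mathlib

section
/- Define V(K) = (1/(1+q))^{N−1} (1−q)^{(N−1)K} (1 + (1−(1−q)^{N−1})·(1−(1−q)^K)/q) for integer K ≥ 0, N ≥ 2, q ∈ (0,1). Then V is nonincreasing in K; in particular V attains its maximum over nonnegative integers at K = 0. -/
/-- The noiseless (ε = 0) individual delivery probability V(K) is nonincreasing in K,
hence maximal at K = 0. -/
theorem V_noiseless_antitone
    (q : ℝ) (hq0 : 0 < q) (hq1 : q < 1) (N : ℕ) (hN : 2 ≤ N) :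
    let V : ℕ → ℝ := fun K =>
      (1 / (1 + q)) ^ (N - 1) * (1 - q) ^ ((N - 1) * K) *
        (1 + (1 - (1 - q) ^ (N - 1)) * (1 - (1 - q) ^ K) / q)
    Antitone V ∧ ∀ K, V K ≤ V 0 := by
  intro V
  have hz : 0 < 1 - q := by linarith
  have hq : q ≠ 0 := ne_of_gt hq0
  have hD : 0 < (1 / (1 + q)) ^ (N - 1) := by positivity
  have hstep : ∀ K, V (K + 1) ≤ V K := by
    intro K
    have hx0 : 0 < (1 - q) ^ (N - 1) := pow_pos hz _
    have hx1 : (1 - q) ^ (N - 1) ≤ 1 := pow_le_one₀ hz.le (by linarith)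
    have hy0 : 0 < (1 - q) ^ K := pow_pos hz _
    have hy1 : (1 - q) ^ K ≤ 1 := pow_le_one₀ hz.le (by linarith)
    have hu0 : 0 < (1 - q) ^ ((N - 1) * K) := pow_pos hz _
    have hexp1 : (1 - q) ^ ((N - 1) * (K + 1))
        = (1 - q) ^ ((N - 1) * K) * (1 - q) ^ (N - 1) := by
      rw [Nat.mul_add, Nat.mul_one, pow_add]
    have hexp2 : (1 - q) ^ (K + 1) = (1 - q) ^ K * (1 - q) := pow_succ _ _
    show (1 / (1 + q)) ^ (N - 1) * (1 - q) ^ ((N - 1) * (K + 1)) *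
        (1 + (1 - (1 - q) ^ (N - 1)) * (1 - (1 - q) ^ (K + 1)) / q)
      ≤ (1 / (1 + q)) ^ (N - 1) * (1 - q) ^ ((N - 1) * K) *
        (1 + (1 - (1 - q) ^ (N - 1)) * (1 - (1 - q) ^ K) / q)
    rw [hexp1, hexp2]
    set D := (1 / (1 + q)) ^ (N - 1) with hDdef
    set x := (1 - q) ^ (N - 1) with hxdef
    set y := (1 - q) ^ K with hydef
    set u := (1 - q) ^ ((N - 1) * K) with hudef
    have key : x * (q + (1 - x) * (1 - y * (1 - q))) ≤ q + (1 - x) * (1 - y) := by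
      nlinarith [mul_nonneg (sub_nonneg.mpr hx1) (sub_nonneg.mpr hy1),
        mul_nonneg (mul_nonneg (sub_nonneg.mpr hx1) hx0.le) hy0.le,
        mul_nonneg (sub_nonneg.mpr hx1) hq0.le,
        mul_nonneg (mul_nonneg (sub_nonneg.mpr hx1) hq0.le)
          (sub_nonneg.mpr (by nlinarith : x * y ≤ 1))]
    have hrw : ∀ t : ℝ, 1 + t / q = (q + t) / q := by
      intro t; field_simp
    rw [hrw, hrw, ← mul_div_assoc, ← mul_div_assoc, div_le_div_iff₀ hq0 hq0]
    have hDu : 0 ≤ D * u := le_of_lt (mul_pos hD hu0)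
    nlinarith [mul_le_mul_of_nonneg_left key hDu, mul_pos hD hu0]
  have hanti : Antitone V := antitone_nat_of_succ_le hstep
  exact ⟨hanti, fun K => hanti (Nat.zero_le K)⟩
end

section
/- Fix integer K ≥ 0, λ > 0, and ε ∈ [0,1). Let V(N,q) denote the finite-user individual delivery probability of Theorem 1. If N → ∞ and q → 0 with Nq → λ, then V(N,q) converges to V_∞ = ((1−ε)/(1−εe^{−λ})) e^{−(K+1)λ} ( (1−e^{−λ})(K+1) + ((1−ε)/(1−εe^{−λ})) e^{−λ}(1−(εe^{−λ})^{K+1}) ). -/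
/-!
Both `(1 - q)^N` and `(1/(1 + q))^(N-1)` behave like `exp (-N q) → e^{-λ}`, because
`log (1 + x) = x + o(x)` and `N q` stays bounded, while `(1 - (1 - q)^K)/q` is a geometric sum
tending to `K`. The finite-user probability is a rational function of these quantities whose
denominators `1 - ε (1 - q)^N` tend to `1 - ε e^{-λ} ≠ 0`, so it converges to that function
evaluated at the limits, which simplifies to `V_∞`.
-/

open Filter Topology Asymptotics

section Limits

variable {ι : Type*} {l : Filter ι} {y : ι → ℝ}

lemma isLittleO_log_one_add_sub_self :
    (fun x : ℝ => Real.log (1 + x) - x) =o[𝓝 0] fun x => x := by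
  have h : HasDerivAt (fun x : ℝ => Real.log (1 + x)) 1 0 := by
    simpa using ((hasDerivAt_id (0 : ℝ)).const_add 1).log (by norm_num)
  simpa using hasDerivAt_iff_isLittleO_nhds_zero.mp h

lemma tendsto_mul_log_one_add_of_tendsto_mul {m : ι → ℝ} {c : ℝ} (hy : Tendsto y l (𝓝 0))
    (hmy : Tendsto (fun i => m i * y i) l (𝓝 c)) :
    Tendsto (fun i => m i * Real.log (1 + y i)) l (𝓝 c) := by
  have herr : Tendsto (fun i => m i * (Real.log (1 + y i) - y i)) l (𝓝 0) :=
    (isLittleO_one_iff ℝ).mp <|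
      ((isBigO_refl m l).mul_isLittleO (isLittleO_log_one_add_sub_self.comp_tendsto hy)).trans_isBigO
        (hmy.isBigO_one ℝ)
  simpa [mul_sub] using hmy.add herr

lemma tendsto_one_add_pow_of_tendsto_mul {m : ι → ℕ} {c : ℝ} (hy : Tendsto y l (𝓝 0))
    (hmy : Tendsto (fun i => (m i : ℝ) * y i) l (𝓝 c)) :
    Tendsto (fun i => (1 + y i) ^ m i) l (𝓝 (Real.exp c)) := by
  refine ((Real.continuous_exp.tendsto c).comp
    (tendsto_mul_log_one_add_of_tendsto_mul hy hmy)).congr' ?_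
  filter_upwards [hy.eventually (lt_mem_nhds (show (-1 : ℝ) < 0 by norm_num))] with i hi
  rw [Function.comp_apply, Real.exp_nat_mul, Real.exp_log (by linarith)]

lemma tendsto_one_sub_pow_of_tendsto_mul {m : ι → ℕ} {c : ℝ} (hy : Tendsto y l (𝓝 0))
    (hmy : Tendsto (fun i => (m i : ℝ) * y i) l (𝓝 c)) :
    Tendsto (fun i => (1 - y i) ^ m i) l (𝓝 (Real.exp (-c))) := by
  simpa [sub_eq_add_neg] using
    tendsto_one_add_pow_of_tendsto_mul (by simpa using hy.neg) (by simpa using hmy.neg)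

lemma tendsto_one_div_one_add_pow_of_tendsto_mul {m : ι → ℕ} {c : ℝ} (hy : Tendsto y l (𝓝 0))
    (hmy : Tendsto (fun i => (m i : ℝ) * y i) l (𝓝 c)) :
    Tendsto (fun i => (1 / (1 + y i)) ^ m i) l (𝓝 (Real.exp (-c))) := by
  simpa [Real.exp_neg] using
    (tendsto_one_add_pow_of_tendsto_mul hy hmy).inv₀ (Real.exp_pos c).ne'

lemma tendsto_one_sub_one_sub_pow_div (K : ℕ) (hy : Tendsto y l (𝓝 0)) (hy0 : ∀ i, y i ≠ 0) :
    Tendsto (fun i => (1 - (1 - y i) ^ K) / y i) l (𝓝 K) := by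
  have hsum : Tendsto (fun i => ∑ j ∈ Finset.range K, (1 - y i) ^ j) l (𝓝 K) := by
    simpa using tendsto_finsetSum (Finset.range K) fun j _ =>
      ((tendsto_const_nhds (x := (1 : ℝ))).sub hy).pow j
  refine hsum.congr fun i => ?_
  rw [eq_div_iff (hy0 i)]
  linear_combination -geom_sum_mul (1 - y i) K

end Limits

/-- The delivery probability `V(N, q)` as a function of `u = (1/(1+q))^(N-1)`, `v = (1-q)^(N-1)`,
`w = (1-q)^N`, `r = (1-q)^K` and `s = (1 - (1-q)^K)/q`. -/
noncomputable def deliveryForm (ε : ℝ) (K : ℕ) (u v w r s : ℝ) : ℝ :=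
  (1 - ε) * u * v ^ K *
    (1 + ε * v * (1 - ε ^ K * w ^ K) / (1 - ε * w)
      + (1 - v) / (1 - ε * w) * (s - ε * (v * r) * (1 - ε ^ K * v ^ K) / (1 - ε * v)))

lemma tendsto_deliveryForm {ι : Type*} {l : Filter ι} {ε a : ℝ} {K : ℕ} {u v w r s : ι → ℝ}
    (hu : Tendsto u l (𝓝 a)) (hv : Tendsto v l (𝓝 a)) (hw : Tendsto w l (𝓝 a))
    (hr : Tendsto r l (𝓝 1)) (hs : Tendsto s l (𝓝 K)) (ha : 1 - ε * a ≠ 0) :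
    Tendsto (fun i => deliveryForm ε K (u i) (v i) (w i) (r i) (s i)) l
      (𝓝 (deliveryForm ε K a a a 1 K)) := by
  have hdw := tendsto_const_nhds (x := (1 : ℝ)).sub (hw.const_mul ε)
  have hdv := tendsto_const_nhds (x := (1 : ℝ)).sub (hv.const_mul ε)
  exact ((hu.const_mul _).mul (hv.pow K)).mul <|
    (tendsto_const_nhds.add (((hv.const_mul ε).mul
      (tendsto_const_nhds.sub ((hw.pow K).const_mul _))).div hdw ha)).add <|
    ((tendsto_const_nhds.sub hv).div hdw ha).mul <|
      hs.sub ((((hv.mul hr).const_mul ε).mul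
        (tendsto_const_nhds.sub ((hv.pow K).const_mul _))).div hdv ha)

lemma deliveryForm_self (ε a : ℝ) (K : ℕ) (ha : 1 - ε * a ≠ 0) :
    deliveryForm ε K a a a 1 K = (1 - ε) / (1 - ε * a) * a ^ (K + 1) *
      ((1 - a) * ((K : ℝ) + 1) + (1 - ε) / (1 - ε * a) * a * (1 - (ε * a) ^ (K + 1))) := by
  unfold deliveryForm
  field_simp
  ring

lemma one_sub_mul_exp_neg_ne_zero {ε lam : ℝ} (hε : ε < 1) (hlam : 0 < lam) :
    1 - ε * Real.exp (-lam) ≠ 0 := by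
  have h1 : Real.exp (-lam) < 1 := Real.exp_lt_one_iff.mpr (by linarith)
  nlinarith [mul_pos (sub_pos.2 hε) (Real.exp_pos (-lam))]

theorem V_tendsto_Vinf_general
    (K : ℕ) (lam ε : ℝ) (hlam : 0 < lam) (hε1 : ε < 1)
    (N : ℕ → ℕ) (q : ℕ → ℝ)
    (hq : ∀ n, 0 < q n ∧ q n < 1) (hN2 : ∀ n, 2 ≤ N n)
    (hq0 : Tendsto q atTop (nhds 0))
    (hNq : Tendsto (fun n => (N n : ℝ) * q n) atTop (nhds lam)) :
    Tendsto (fun n =>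
        (1 - ε) * (1 / (1 + q n)) ^ (N n - 1) * (1 - q n) ^ ((N n - 1) * K) *
          (1 + ε * (1 - q n) ^ (N n - 1) *
                (1 - ε ^ K * (1 - q n) ^ (K * N n)) / (1 - ε * (1 - q n) ^ (N n))
            + (1 - (1 - q n) ^ (N n - 1)) / (1 - ε * (1 - q n) ^ (N n)) *
                ((1 - (1 - q n) ^ K) / q n -
                  ε * (1 - q n) ^ (N n + K - 1) *
                    (1 - ε ^ K * (1 - q n) ^ ((N n - 1) * K)) /
                      (1 - ε * (1 - q n) ^ (N n - 1)))))
      atTop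
      (nhds ((1 - ε) / (1 - ε * Real.exp (-lam)) * Real.exp (-((K : ℝ) + 1) * lam) *
        ((1 - Real.exp (-lam)) * ((K : ℝ) + 1) +
          (1 - ε) / (1 - ε * Real.exp (-lam)) * Real.exp (-lam) *
            (1 - (ε * Real.exp (-lam)) ^ (K + 1))))) := by
  have hN1q : Tendsto (fun n => ((N n - 1 : ℕ) : ℝ) * q n) atTop (𝓝 lam) := by
    refine (sub_zero lam ▸ hNq.sub hq0).congr fun n => ?_
    rw [Nat.cast_sub (by linarith [hN2 n]), Nat.cast_one]
    ring
  have hr : Tendsto (fun n => (1 - q n) ^ K) atTop (𝓝 1) := by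
    simpa using ((tendsto_const_nhds (x := (1 : ℝ))).sub hq0).pow K
  have hden := one_sub_mul_exp_neg_ne_zero hε1 hlam
  have hlim := tendsto_deliveryForm (tendsto_one_div_one_add_pow_of_tendsto_mul hq0 hN1q)
    (tendsto_one_sub_pow_of_tendsto_mul hq0 hN1q) (tendsto_one_sub_pow_of_tendsto_mul hq0 hNq) hr
    (tendsto_one_sub_one_sub_pow_div K hq0 fun n => (hq n).1.ne') hden
  rw [deliveryForm_self _ _ _ hden, ← Real.exp_nat_mul] at hlim
  convert hlim using 2 with n
  · rw [deliveryForm, ← pow_mul, ← pow_mul, ← pow_add, mul_comm K,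
      Nat.sub_add_comm (by linarith [hN2 n])]
  · push_cast
    ring_nf

/-- Poisson limit: the finite-user individual delivery probability converges to the
infinite-user one as N → ∞, q → 0, Nq → λ. -/
theorem V_tendsto_Vinf
    (K : ℕ) (lam ε : ℝ) (hlam : 0 < lam) (hε0 : 0 ≤ ε) (hε1 : ε < 1)
    (N : ℕ → ℕ) (q : ℕ → ℝ)
    (hq : ∀ n, 0 < q n ∧ q n < 1) (hN2 : ∀ n, 2 ≤ N n)
    (hN : Tendsto N atTop atTop)
    (hq0 : Tendsto q atTop (nhds 0))
    (hNq : Tendsto (fun n => (N n : ℝ) * q n) atTop (nhds lam)) :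
    Tendsto (fun n =>
        (1 - ε) * (1 / (1 + q n)) ^ (N n - 1) * (1 - q n) ^ ((N n - 1) * K) *
          (1 + ε * (1 - q n) ^ (N n - 1) *
                (1 - ε ^ K * (1 - q n) ^ (K * N n)) / (1 - ε * (1 - q n) ^ (N n))
            + (1 - (1 - q n) ^ (N n - 1)) / (1 - ε * (1 - q n) ^ (N n)) *
                ((1 - (1 - q n) ^ K) / q n -
                  ε * (1 - q n) ^ (N n + K - 1) *
                    (1 - ε ^ K * (1 - q n) ^ ((N n - 1) * K)) /
                      (1 - ε * (1 - q n) ^ (N n - 1)))))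
      atTop
      (nhds ((1 - ε) / (1 - ε * Real.exp (-lam)) * Real.exp (-((K : ℝ) + 1) * lam) *
        ((1 - Real.exp (-lam)) * ((K : ℝ) + 1) +
          (1 - ε) / (1 - ε * Real.exp (-lam)) * Real.exp (-lam) *
            (1 - (ε * Real.exp (-lam)) ^ (K + 1))))) :=
  V_tendsto_Vinf_general K lam ε hlam hε1 N q hq hN2 hq0 hNq
end

section
/- For λ > 0 and ε ∈ (0,1), define A = ((1−ε)/(1−εe^{−λ})) · e^{−λ}/(1−e^{−λ}) and F(x) = x − 1/λ + A(1 − (1 − log(εe^{−λ})/λ)(εe^{−λ})^x) for x ≥ 0. Then F(0) < 0, F is strictly increasing on [0,∞), F(x) → ∞ as x → ∞, and F has a unique root x* ∈ (0,∞). -/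
/-- Properties of F(x) = x − 1/λ + A(1 − (1 − log(εe^{−λ})/λ)(εe^{−λ})^x):
F(0)<0, F strictly increasing on [0,∞), F → ∞, unique positive root. -/
theorem F_root_properties (lam ε : ℝ) (hlam : 0 < lam) (hε0 : 0 < ε) (hε1 : ε < 1) :
    let A : ℝ := (1 - ε) / (1 - ε * Real.exp (-lam)) *
      (Real.exp (-lam) / (1 - Real.exp (-lam)))
    let F : ℝ → ℝ := fun x => x - 1 / lam +
      A * (1 - (1 - Real.log (ε * Real.exp (-lam)) / lam) * (ε * Real.exp (-lam)) ^ x)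
    F 0 < 0 ∧ StrictMonoOn F (Set.Ici 0) ∧
      Filter.Tendsto F Filter.atTop Filter.atTop ∧
      ∃! x : ℝ, 0 < x ∧ F x = 0 := by
  intro A F
  set q : ℝ := ε * Real.exp (-lam) with hq_def
  have hexp_pos : 0 < Real.exp (-lam) := Real.exp_pos _
  have hexp_lt1 : Real.exp (-lam) < 1 := Real.exp_lt_one_iff.2 (by linarith)
  have hq0 : 0 < q := mul_pos hε0 hexp_pos
  have hq1 : q < 1 := by
    calc q < 1 * 1 := by
            apply mul_lt_mul' hε1.le hexp_lt1 hexp_pos.le (by linarith)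
      _ = 1 := by ring
  have hlogq : Real.log q < 0 := Real.log_neg hq0 hq1
  have hA : 0 < A := by
    apply mul_pos <;> apply div_pos <;> linarith
  set c : ℝ := 1 - Real.log q / lam with hc_def
  have hc : 1 < c := by
    have : Real.log q / lam < 0 := div_neg_of_neg_of_pos hlogq hlam
    simp [hc_def]; linarith
  have hAc : 0 < A * c := mul_pos hA (by linarith)
  have hclam : A * (1 - c) = A * (Real.log q / lam) := by rw [hc_def]; ring
  have hF_eq : ∀ y : ℝ, F y = y - 1 / lam + A * (1 - c * q ^ y) := fun _ => rfl
  clear_value F A c q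
  -- F(0) < 0
  have hF0 : F 0 < 0 := by
    rw [hF_eq, Real.rpow_zero, mul_one, hclam]
    have h2 : A * (Real.log q / lam) < 0 :=
      mul_neg_of_pos_of_neg hA (div_neg_of_neg_of_pos hlogq hlam)
    have h3 : 0 < 1 / lam := by positivity
    linarith
  -- strict monotonicity (on all of ℝ)
  have hanti : StrictAnti (fun x : ℝ => q ^ x) := fun a b hab =>
    Real.rpow_lt_rpow_of_exponent_gt hq0 hq1 hab
  have hmono : StrictMono F := by
    intro a b hab
    have h1 : q ^ b < q ^ a := hanti hab
    rw [hF_eq, hF_eq]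
    nlinarith
  -- tendsto atTop
  have htend : Filter.Tendsto F Filter.atTop Filter.atTop := by
    apply Filter.tendsto_atTop_mono' _ _
      (Filter.tendsto_atTop_add_const_right _ (-1/lam + A * (1 - c)) Filter.tendsto_id)
    filter_upwards [Filter.eventually_ge_atTop (0:ℝ)] with x hx
    have h1 : q ^ x ≤ 1 := Real.rpow_le_one hq0.le hq1.le hx
    rw [hF_eq]
    show x + (-1/lam + A * (1 - c)) ≤ x - 1/lam + A * (1 - c * q ^ x)
    have h2 : A * c * q ^ x ≤ A * c := mul_le_of_le_one_right hAc.le h1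
    have e0 : (-1 : ℝ)/lam = -(1/lam) := by ring
    have e1 : A * (1 - c) = A - A * c := by ring
    have e2 : A * (1 - c * q ^ x) = A - A * c * q ^ x := by ring
    linarith
  refine ⟨hF0, hmono.strictMonoOn _, htend, ?_⟩
  -- existence of a root
  obtain ⟨M, hFM, hM0⟩ :=
    ((htend.eventually (Filter.eventually_gt_atTop 0)).and
      (Filter.eventually_ge_atTop 0)).exists
  have hqcont : Continuous fun x : ℝ => q ^ x := by
    have : (fun x : ℝ => q ^ x) = fun x => Real.exp (Real.log q * x) :=
      funext fun x => Real.rpow_def_of_pos hq0 x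
    rw [this]; continuity
  have hFcont : Continuous F := by
    have : F = fun x => x - 1 / lam + A * (1 - c * q ^ x) := funext hF_eq
    rw [this]
    apply Continuous.add (by continuity)
    exact continuous_const.mul (continuous_const.sub (continuous_const.mul hqcont))
  have hsub := intermediate_value_Icc hM0 hFcont.continuousOn
  have h0mem : (0 : ℝ) ∈ Set.Icc (F 0) (F M) := ⟨hF0.le, hFM.le⟩
  obtain ⟨x, hxmem, hxroot⟩ := hsub h0mem
  have hxpos : 0 < x := by
    rcases lt_or_eq_of_le hxmem.1 with h | h
    · exact h
    · exfalso; rw [← h] at hxroot; linarith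
  refine ⟨x, ⟨hxpos, hxroot⟩, fun y hy => ?_⟩
  exact hmono.injective (by rw [hy.2, hxroot])
end

section
/- For λ > 0 and ε ∈ (0,1), the continuous maximizer x* of g(x) = e^{−xλ}((1−e^{−λ})x + e^{−λ}((1−ε)/(1−εe^{−λ}))(1−(εe^{−λ})^x)) over x ≥ 0 satisfies x* < 1/λ + A, where A = ((1−ε)/(1−εe^{−λ})) e^{−λ}/(1−e^{−λ}). -/
/-!
Write `g x = exp (-x λ) (c x + a (1 - q ^ x))` with `c = 1 - e^{-λ}`, `a = e^{-λ} (1 - ε) / (1 - ε e^{-λ})`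
and `q = ε e^{-λ} ∈ (0, 1)`. At an interior maximizer `x` the derivative vanishes,
which reads `λ c x = c - a λ + a q ^ x (λ - log q)`. If `x > 1/λ`, then `q ^ x ≤ q ^ (1/λ)` (as `q ≤ 1`),
and `q ^ (1/λ) (λ - log q) ≤ λ` is `1 + t ≤ exp t` for `t = -log q / λ`; hence `λ c x ≤ c`, a
contradiction. So every maximizer satisfies `x ≤ 1/λ`, which is below `1/λ + A` since `A > 0`.
-/

open Real Set

noncomputable def decayedGain (lam c a q x : ℝ) : ℝ :=
  exp (-x * lam) * (c * x + a * (1 - q ^ x))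

theorem rpow_inv_mul_sub_log_le {q lam : ℝ} (hq : 0 < q) (hlam : 0 < lam) :
    q ^ (1 / lam) * (lam - log q) ≤ lam := by
  have hexp : q ^ (1 / lam) * exp (-log q / lam) = 1 := by
    rw [rpow_def_of_pos hq, ← exp_add, show log q * (1 / lam) + -log q / lam = 0 by ring, exp_zero]
  have hlin : lam - log q ≤ lam * exp (-log q / lam) := by
    have := mul_le_mul_of_nonneg_left (add_one_le_exp (-log q / lam)) hlam.le
    rwa [mul_add, mul_div_cancel₀ _ hlam.ne', mul_one, neg_add_eq_sub] at this
  calc q ^ (1 / lam) * (lam - log q)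
      ≤ q ^ (1 / lam) * (lam * exp (-log q / lam)) :=
        mul_le_mul_of_nonneg_left hlin (rpow_nonneg hq.le _)
    _ = lam := by rw [mul_left_comm, hexp, mul_one]

theorem hasDerivAt_decayedGain {q : ℝ} (hq : 0 < q) (lam c a x : ℝ) :
    HasDerivAt (decayedGain lam c a q)
      (exp (-x * lam) * (c - a * log q * q ^ x - lam * (c * x + a * (1 - q ^ x)))) x := by
  have hexp : HasDerivAt (fun x : ℝ => exp (-x * lam)) (exp (-x * lam) * (-1 * lam)) x :=
    ((hasDerivAt_id x).neg.mul_const lam).exp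
  have hpow : HasDerivAt (fun x : ℝ => q ^ x) (log q * 1 * q ^ x) x :=
    (hasDerivAt_id x).const_rpow hq
  have hlin : HasDerivAt (fun x : ℝ => c * x + a * (1 - q ^ x)) (c * 1 + a * (0 - log q * 1 * q ^ x)) x :=
    ((hasDerivAt_id x).const_mul c).add (((hasDerivAt_const x 1).sub hpow).const_mul a)
  exact (hexp.mul hlin).congr_deriv (by ring)

theorem IsLocalMax.decayedGain_critical {lam c a q x : ℝ} (hq : 0 < q)
    (hmax : IsLocalMax (decayedGain lam c a q) x) :
    lam * (c * x + a * (1 - q ^ x)) = c - a * log q * q ^ x := by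
  have h := hmax.hasDerivAt_eq_zero (hasDerivAt_decayedGain hq lam c a x)
  rcases mul_eq_zero.mp h with h | h
  · exact absurd h (exp_pos _).ne'
  · linarith

theorem IsMaxOn.decayedGain_le_inv {lam c a q x : ℝ} (hlam : 0 < lam) (hc : 0 < c) (ha : 0 ≤ a)
    (hq0 : 0 < q) (hq1 : q ≤ 1) (hmax : IsMaxOn (decayedGain lam c a q) (Ici 0) x) :
    x ≤ 1 / lam := by
  by_contra! hx
  have hx0 : 0 < x := (one_div_pos.mpr hlam).trans hx
  have hcrit := (hmax.isLocalMax (Ici_mem_nhds hx0)).decayedGain_critical hq0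
  have hlog : log q ≤ 0 := log_nonpos hq0.le hq1
  have hdecay : q ^ x * (lam - log q) ≤ lam :=
    calc q ^ x * (lam - log q) ≤ q ^ (1 / lam) * (lam - log q) :=
        mul_le_mul_of_nonneg_right (rpow_le_rpow_of_exponent_ge hq0 hq1 hx.le) (by linarith)
      _ ≤ lam := rpow_inv_mul_sub_log_le hq0 hlam
  have hcx : lam * c * x ≤ c := by nlinarith [mul_le_mul_of_nonneg_left hdecay ha]
  rw [div_lt_iff₀ hlam] at hx
  nlinarith

theorem g_maximizer_bound_general (lam ε : ℝ) (hlam : 0 < lam) (hε0 : 0 < ε) (hε1 : ε < 1)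
    (xs : ℝ)
    (hmax : IsMaxOn (fun x : ℝ => Real.exp (-x * lam) *
        ((1 - Real.exp (-lam)) * x +
          Real.exp (-lam) * ((1 - ε) / (1 - ε * Real.exp (-lam))) *
            (1 - (ε * Real.exp (-lam)) ^ x)))
      (Set.Ici 0) xs) :
    xs < 1 / lam + (1 - ε) / (1 - ε * Real.exp (-lam)) *
      (Real.exp (-lam) / (1 - Real.exp (-lam))) := by
  have hd0 : 0 < exp (-lam) := exp_pos _
  have hd1 : exp (-lam) < 1 := exp_lt_one_iff.mpr (neg_lt_zero.mpr hlam)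
  have hq1 : ε * exp (-lam) < 1 := by nlinarith
  have hw : 0 < (1 - ε) / (1 - ε * exp (-lam)) := div_pos (by linarith) (by linarith)
  have hA : 0 < (1 - ε) / (1 - ε * exp (-lam)) * (exp (-lam) / (1 - exp (-lam))) :=
    mul_pos hw (div_pos hd0 (by linarith))
  have hle : xs ≤ 1 / lam :=
    IsMaxOn.decayedGain_le_inv hlam (by linarith) (mul_pos hd0 hw).le (mul_pos hε0 hd0) hq1.le hmax
  linarith

/-- Any maximizer x* ≥ 0 of the continuous relaxation g satisfies x* < 1/λ + A. -/
theorem g_maximizer_bound (lam ε : ℝ) (hlam : 0 < lam) (hε0 : 0 < ε) (hε1 : ε < 1)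
    (xs : ℝ) (hxs : 0 ≤ xs)
    (hmax : IsMaxOn (fun x : ℝ => Real.exp (-x * lam) *
        ((1 - Real.exp (-lam)) * x +
          Real.exp (-lam) * ((1 - ε) / (1 - ε * Real.exp (-lam))) *
            (1 - (ε * Real.exp (-lam)) ^ x)))
      (Set.Ici 0) xs) :
    xs < 1 / lam + (1 - ε) / (1 - ε * Real.exp (-lam)) *
      (Real.exp (-lam) / (1 - Real.exp (-lam))) :=
  g_maximizer_bound_general lam ε hlam hε0 hε1 xs hmax
end

section
/- In the finite model with ε = 0, the system delivery probability W(K) = N·(q/(1+q))·V(K), where V(K) = (1/(1+q))^{N−1}(1−q)^{(N−1)K}(1 + (1−(1−q)^{N−1})(1−(1−q)^K)/q), satisfies W(0) = N (q/(1+q)) (1/(1+q))^{N−1}, and for all K ≥ 0, W(K) ≤ W(0). -/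
lemma W_noiseless_aux (q : ℝ) (hq0 : 0 < q) (hq1 : q < 1) (m : ℕ) :
    ∀ K : ℕ, (1 - q) ^ (m * K) *
      (1 + (1 - (1 - q) ^ m) * (1 - (1 - q) ^ K) / q) ≤ 1 := by
  have hr0 : (0:ℝ) ≤ 1 - q := by linarith
  have hr1 : (1:ℝ) - q ≤ 1 := by linarith
  have ha0 : (0:ℝ) ≤ (1 - q) ^ m := pow_nonneg hr0 m
  have ha1 : (1 - q : ℝ) ^ m ≤ 1 := pow_le_one₀ hr0 hr1
  intro K
  induction K with
  | zero => simp
  | succ K ih =>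
    have hA0 : (0:ℝ) ≤ (1 - q) ^ (m * K) := pow_nonneg hr0 _
    have hA1 : (1 - q : ℝ) ^ (m * K) ≤ 1 := pow_le_one₀ hr0 hr1
    have hb0 : (0:ℝ) ≤ (1 - q) ^ K := pow_nonneg hr0 _
    have hb1 : (1 - q : ℝ) ^ K ≤ 1 := pow_le_one₀ hr0 hr1
    have hqne : q ≠ 0 := ne_of_gt hq0
    have key : (1 - q) ^ (m * (K + 1)) *
        (1 + (1 - (1 - q) ^ m) * (1 - (1 - q) ^ (K + 1)) / q)
        = (1 - q) ^ m * ((1 - q) ^ (m * K) *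
            (1 + (1 - (1 - q) ^ m) * (1 - (1 - q) ^ K) / q))
          + (1 - q) ^ m * (1 - q) ^ (m * K) * (1 - (1 - q) ^ m) * (1 - q) ^ K := by
      rw [Nat.mul_add, mul_one, pow_add, pow_succ]
      field_simp
      ring
    rw [key]
    have h1 : (1 - q) ^ m * ((1 - q) ^ (m * K) *
        (1 + (1 - (1 - q) ^ m) * (1 - (1 - q) ^ K) / q)) ≤ (1 - q) ^ m := by
      calc (1 - q) ^ m * ((1 - q) ^ (m * K) *
            (1 + (1 - (1 - q) ^ m) * (1 - (1 - q) ^ K) / q))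
          ≤ (1 - q) ^ m * 1 := mul_le_mul_of_nonneg_left ih ha0
        _ = (1 - q) ^ m := mul_one _
    have h2 : (1 - q) ^ m * (1 - q) ^ (m * K) * (1 - (1 - q) ^ m) * (1 - q) ^ K
        ≤ 1 - (1 - q) ^ m := by
      have hp1 : (1 - q) ^ m * (1 - q) ^ (m * K) * (1 - q) ^ K ≤ 1 := by
        calc (1 - q) ^ m * (1 - q) ^ (m * K) * (1 - q) ^ K ≤ 1 * 1 * 1 := by
              apply mul_le_mul (mul_le_mul ha1 hA1 hA0 (by norm_num)) hb1 hb0 (by norm_num)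
          _ = 1 := by norm_num
      have hp0 : 0 ≤ (1 - q) ^ m * (1 - q) ^ (m * K) * (1 - q) ^ K :=
        mul_nonneg (mul_nonneg ha0 hA0) hb0
      nlinarith [ha1, hp1, hp0]
    linarith

/-- In the noiseless finite-user model the system delivery probability
W(K) = N (q/(1+q)) V(K) satisfies W(0) = N (q/(1+q)) (1/(1+q))^{N−1}
and W(K) ≤ W(0) for all K. -/
theorem W_noiseless_max_at_zero
    (q : ℝ) (hq0 : 0 < q) (hq1 : q < 1) (N : ℕ) (hN : 2 ≤ N) :
    let W : ℕ → ℝ := fun K => (N : ℝ) * (q / (1 + q)) *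
      ((1 / (1 + q)) ^ (N - 1) * (1 - q) ^ ((N - 1) * K) *
        (1 + (1 - (1 - q) ^ (N - 1)) * (1 - (1 - q) ^ K) / q))
    W 0 = (N : ℝ) * (q / (1 + q)) * (1 / (1 + q)) ^ (N - 1) ∧ ∀ K, W K ≤ W 0 := by
  intro W
  have hC : (0:ℝ) ≤ (N : ℝ) * (q / (1 + q)) * (1 / (1 + q)) ^ (N - 1) := by
    have hN0 : (0:ℝ) ≤ (N:ℝ) := Nat.cast_nonneg N
    have h1q : (0:ℝ) < 1 + q := by linarith
    positivity
  have hW0 : W 0 = (N : ℝ) * (q / (1 + q)) * (1 / (1 + q)) ^ (N - 1) := by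
    simp [W]
  refine ⟨hW0, fun K => ?_⟩
  have h := W_noiseless_aux q hq0 hq1 (N - 1) K
  have : W K = (N : ℝ) * (q / (1 + q)) * (1 / (1 + q)) ^ (N - 1) *
      ((1 - q) ^ ((N - 1) * K) *
        (1 + (1 - (1 - q) ^ (N - 1)) * (1 - (1 - q) ^ K) / q)) := by
    simp [W]; ring
  rw [this, hW0]
  calc (N : ℝ) * (q / (1 + q)) * (1 / (1 + q)) ^ (N - 1) *
        ((1 - q) ^ ((N - 1) * K) *
          (1 + (1 - (1 - q) ^ (N - 1)) * (1 - (1 - q) ^ K) / q))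
      ≤ (N : ℝ) * (q / (1 + q)) * (1 / (1 + q)) ^ (N - 1) * 1 :=
        mul_le_mul_of_nonneg_left h hC
    _ = (N : ℝ) * (q / (1 + q)) * (1 / (1 + q)) ^ (N - 1) := mul_one _
end

section
/- For λ > 0 and ε ∈ (0,1), if K is large enough that (K+1)λ ≥ 1, then V_∞(K+1) < V_∞(K); i.e., once K+1 ≥ 1/λ the infinite-user delivery probability strictly decreases in K. -/
lemma geom_aux (r : ℝ) (h0 : 0 ≤ r) (h1 : r ≤ 1) :
    ∀ m : ℕ, ((m : ℝ) + 1) * r ^ m * (1 - r) ≤ 1 - r ^ (m + 1) := by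
  intro m
  induction m with
  | zero => simp
  | succ m ih =>
      have hpow : r ^ (m + 1) ≤ r ^ m := pow_le_pow_of_le_one h0 h1 (Nat.le_succ m)
      have hpn : (0 : ℝ) ≤ r ^ (m + 1) := pow_nonneg h0 _
      have h1r : (0 : ℝ) ≤ 1 - r := by linarith
      have hm : (0 : ℝ) ≤ (m : ℝ) + 1 := by positivity
      push_cast
      have e1 : r ^ (m + 1 + 1) = r ^ (m + 1) * r := pow_succ r (m + 1)
      have e2 : r ^ (m + 1) = r ^ m * r := pow_succ r m
      nlinarith [mul_le_mul_of_nonneg_right (mul_le_mul_of_nonneg_left hpow hm) h1r]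

/-- Once (K+1)λ ≥ 1, the infinite-user delivery probability strictly decreases in K. -/
theorem Vinf_decreasing_beyond (lam ε : ℝ) (hlam : 0 < lam) (hε0 : 0 < ε) (hε1 : ε < 1)
    (K : ℕ) (hK : 1 ≤ ((K : ℝ) + 1) * lam) :
    (1 - ε) / (1 - ε * Real.exp (-lam)) * Real.exp (-(((K : ℝ) + 1) + 1) * lam) *
        ((1 - Real.exp (-lam)) * (((K : ℝ) + 1) + 1) +
          (1 - ε) / (1 - ε * Real.exp (-lam)) * Real.exp (-lam) *
            (1 - (ε * Real.exp (-lam)) ^ (K + 2)))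
      < (1 - ε) / (1 - ε * Real.exp (-lam)) * Real.exp (-((K : ℝ) + 1) * lam) *
          ((1 - Real.exp (-lam)) * ((K : ℝ) + 1) +
            (1 - ε) / (1 - ε * Real.exp (-lam)) * Real.exp (-lam) *
              (1 - (ε * Real.exp (-lam)) ^ (K + 1))) := by
  set q : ℝ := Real.exp (-lam) with hqdef
  have hq0 : 0 < q := Real.exp_pos _
  have hq1 : q < 1 := by
    rw [hqdef]; exact Real.exp_lt_one_iff.mpr (by linarith)
  set r : ℝ := ε * q with hrdef
  have hr0 : 0 < r := mul_pos hε0 hq0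
  have hr1 : r < 1 := by
    have h := mul_lt_mul_of_pos_right hε1 hq0
    rw [one_mul] at h
    exact lt_trans h hq1
  set c : ℝ := (1 - ε) / (1 - r) with hcdef
  have hc0 : 0 < c := div_pos (by linarith) (by linarith)
  have hc : c * (1 - r) = 1 - ε := div_mul_cancel₀ _ (by linarith)
  set n : ℝ := (K : ℝ) + 1 with hndef
  have hn0 : (0 : ℝ) < n := by positivity
  -- rewrite exponentials as powers of q
  have e1 : Real.exp (-((K : ℝ) + 1) * lam) = q ^ (K + 1) := by
    rw [hqdef, ← Real.exp_nat_mul]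
    congr 1; push_cast; ring
  have e2 : Real.exp (-(((K : ℝ) + 1) + 1) * lam) = q ^ (K + 2) := by
    rw [hqdef, ← Real.exp_nat_mul]
    congr 1; push_cast; ring
  rw [e1, e2]
  -- key facts
  have hlin : q * (lam + 1) < 1 := by
    have h := Real.add_one_lt_exp (ne_of_gt hlam)
    have h' : q * (lam + 1) < q * Real.exp lam :=
      mul_lt_mul_of_pos_left h hq0
    rwa [hqdef, ← Real.exp_add, neg_add_cancel, Real.exp_zero] at h'
  have h1 : q < n * (1 - q) := by
    nlinarith [mul_lt_mul_of_pos_left hlin hn0]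
  have h3 : 1 ≤ (n + 1) * (1 - q) := by nlinarith
  have h2 : (n + 1) * r ^ (K + 1) * (1 - r) ≤ 1 - r ^ (K + 2) := by
    have h := geom_aux r hr0.le hr1.le (K + 1)
    have hcast : ((K + 1 : ℕ) : ℝ) + 1 = n + 1 := by rw [hndef]; push_cast; ring
    rwa [hcast] at h
  have hpN : (0 : ℝ) < r ^ (K + 1) := pow_pos hr0 _
  have hfac : (0 : ℝ) < c * q ^ (K + 1) := by positivity
  -- the core inequality (after dividing by c * q^(K+1))
  have core : q * ((1 - q) * (n + 1) + c * q * (1 - r ^ (K + 2)))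
      < (1 - q) * n + c * q * (1 - r ^ (K + 1)) := by
    have hcq : (0 : ℝ) ≤ c * q * (1 - q) :=
      mul_nonneg (mul_nonneg hc0.le hq0.le) (by linarith)
    have hA : (n + 1) * r ^ (K + 1) * (1 - r) * (c * q * (1 - q))
        ≤ (1 - r ^ (K + 2)) * (c * q * (1 - q)) :=
      mul_le_mul_of_nonneg_right h2 hcq
    have hB : 0 ≤ (1 - ε) * q * r ^ (K + 1) * ((n + 1) * (1 - q) - 1) :=
      mul_nonneg (mul_nonneg (mul_nonneg (by linarith) hq0.le) hpN.le) (by linarith)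
    have h1' : 0 < (1 - q) * (n * (1 - q) - q) :=
      mul_pos (by linarith) (by linarith)
    have identity : (1 - q) * n + c * q * (1 - r ^ (K + 1))
          - q * ((1 - q) * (n + 1) + c * q * (1 - r ^ (K + 1) * r))
        = (1 - q) * (n * (1 - q) - q)
          + ((1 - r ^ (K + 1) * r) * (c * q * (1 - q))
              - (n + 1) * r ^ (K + 1) * (1 - r) * (c * q * (1 - q)))
          + (1 - ε) * q * r ^ (K + 1) * ((n + 1) * (1 - q) - 1) := by
      linear_combination (q * r ^ (K + 1) * ((n + 1) * (1 - q) - 1)) * hc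
    have epow : r ^ (K + 2) = r ^ (K + 1) * r := pow_succ r (K + 1)
    rw [epow] at hA ⊢
    linarith [identity, hA, hB, h1']
  calc c * q ^ (K + 2) * ((1 - q) * (n + 1) + c * q * (1 - r ^ (K + 2)))
      = (c * q ^ (K + 1)) * (q * ((1 - q) * (n + 1) + c * q * (1 - r ^ (K + 2)))) := by
        rw [pow_succ]; ring
    _ < (c * q ^ (K + 1)) * ((1 - q) * n + c * q * (1 - r ^ (K + 1))) :=
        mul_lt_mul_of_pos_left core hfac
    _ = c * q ^ (K + 1) * ((1 - q) * n + c * q * (1 - r ^ (K + 1))) := by ring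
end

section
/- For λ > 0, ε ∈ [0,1), and integer K ≥ 0, V_∞(K,ε) ≥ (1−ε)·V_∞(K,0). -/
lemma Vinf_key (q ε : ℝ) (hq0 : 0 < q) (hq1 : q < 1) (hε0 : 0 ≤ ε) (hε1 : ε < 1) (K : ℕ) :
    (1 - ε * q) ^ 2 * (1 + (K : ℝ) * (1 - q))
      ≤ (1 - ε * q) * ((1 - q) * ((K : ℝ) + 1))
        + (1 - ε) * q * (1 - (ε * q) ^ (K + 1)) := by
  have hεq0 : 0 ≤ ε * q := mul_nonneg hε0 hq0.le
  have hεq1 : ε * q < 1 := by nlinarith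
  induction K with
  | zero => push_cast; nlinarith
  | succ n ih =>
    have hp : 0 ≤ (ε * q) ^ (n + 1) := pow_nonneg hεq0 _
    have hp1 : (ε * q) ^ (n + 1) ≤ 1 := pow_le_one₀ hεq0 hεq1.le
    have hstep : (ε * q) ^ (n + 1 + 1) = (ε * q) ^ (n + 1) * (ε * q) := by ring
    have ha : 0 < 1 - ε * q := by linarith
    push_cast
    push_cast at ih
    nlinarith [hstep, mul_nonneg (mul_nonneg (mul_nonneg (by linarith : (0:ℝ) ≤ 1 - ε) hq0.le) hp) ha.le,
      mul_nonneg (mul_nonneg hεq0 ha.le) (by linarith : (0:ℝ) ≤ 1 - q)]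

/-- The noisy infinite-user delivery probability dominates (1−ε) times the
noiseless one: V_∞(K,ε) ≥ (1−ε)·V_∞(K,0). -/
theorem Vinf_ge_scaled_noiseless
    (lam ε : ℝ) (hlam : 0 < lam) (hε0 : 0 ≤ ε) (hε1 : ε < 1) (K : ℕ) :
    (1 - ε) * (Real.exp (-((K : ℝ) + 1) * lam) * (1 + (K : ℝ) * (1 - Real.exp (-lam))))
      ≤ (1 - ε) / (1 - ε * Real.exp (-lam)) * Real.exp (-((K : ℝ) + 1) * lam) *
          ((1 - Real.exp (-lam)) * ((K : ℝ) + 1) +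
            (1 - ε) / (1 - ε * Real.exp (-lam)) * Real.exp (-lam) *
              (1 - (ε * Real.exp (-lam)) ^ (K + 1))) := by
  set q := Real.exp (-lam) with hqdef
  have hq0 : 0 < q := Real.exp_pos _
  have hq1 : q < 1 := by
    rw [hqdef]
    exact Real.exp_lt_one_iff.2 (by linarith)
  have hεq1 : ε * q < 1 := by nlinarith
  have ha : 0 < 1 - ε * q := by linarith
  have hE : 0 < Real.exp (-((K : ℝ) + 1) * lam) := Real.exp_pos _
  set E := Real.exp (-((K : ℝ) + 1) * lam)
  have key := Vinf_key q ε hq0 hq1 hε0 hε1 K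
  have hm : 0 ≤ (1 - ε) * E / (1 - ε * q) ^ 2 :=
    div_nonneg (mul_nonneg (by linarith) hE.le) (sq_nonneg _)
  have h1 : (1 - ε) * (E * (1 + (K : ℝ) * (1 - q)))
      = (1 - ε) * E / (1 - ε * q) ^ 2 * ((1 - ε * q) ^ 2 * (1 + (K : ℝ) * (1 - q))) := by
    field_simp
  have h2 : (1 - ε) / (1 - ε * q) * E *
        ((1 - q) * ((K : ℝ) + 1) + (1 - ε) / (1 - ε * q) * q * (1 - (ε * q) ^ (K + 1)))
      = (1 - ε) * E / (1 - ε * q) ^ 2 *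
        ((1 - ε * q) * ((1 - q) * ((K : ℝ) + 1)) + (1 - ε) * q * (1 - (ε * q) ^ (K + 1))) := by
    field_simp
  rw [h1, h2]
  exact mul_le_mul_of_nonneg_left key hm
end

section
/- For q ∈ (0,1), N ≥ 2, ε ∈ [0,1), and K ≥ 0, the quantity Ṽ(K) = (1−ε)(1−q)^{(N−1)K}/(1+q)^{N−1} · ( (1−ε^{K+1}(1−q)^{(N−1)(K+1)})/(1−ε(1−q)^{N−1}) + ((1−(1−q)^{N−1})/(1−ε(1−q)^{N−1}))·(K − ε(1−q)^{N−1}(1−(ε(1−q)^{N−1})^K)/(1−ε(1−q)^{N−1})) ) satisfies 0 ≤ Ṽ(K) ≤ 1. -/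
set_option maxHeartbeats 1000000

/-- Key auxiliary bound: `r^K (1 + (1-r)K) ≤ 1` for `r ∈ [0,1]`. -/
lemma aux_pow_bound (r : ℝ) (h0 : 0 ≤ r) (h1 : r ≤ 1) :
    ∀ K : ℕ, r ^ K * (1 + (1 - r) * K) ≤ 1 := by
  intro K
  induction K with
  | zero => simp
  | succ K ih =>
    have hp : r ^ K ≤ 1 := pow_le_one₀ h0 h1
    have hp0 : 0 ≤ r ^ K := pow_nonneg h0 K
    have h1' : r ^ K * r ≤ 1 := mul_le_one₀ hp h0 h1
    rw [pow_succ]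
    push_cast
    push_cast at ih
    nlinarith [mul_le_mul_of_nonneg_left ih h0,
      mul_le_mul_of_nonneg_left h1' (show (0:ℝ) ≤ 1 - r by linarith)]

/-- The individual delivery probability Ṽ(K) from Remark 3 (messages carrying state
history) lies in [0,1]. -/
theorem Vtilde_mem_Icc
    (q : ℝ) (hq0 : 0 < q) (hq1 : q < 1) (N : ℕ) (hN : 2 ≤ N)
    (ε : ℝ) (hε0 : 0 ≤ ε) (hε1 : ε < 1) (K : ℕ) :
    0 ≤ (1 - ε) * ((1 - q) ^ ((N - 1) * K) / (1 + q) ^ (N - 1)) *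
          ((1 - ε ^ (K + 1) * (1 - q) ^ ((N - 1) * (K + 1))) / (1 - ε * (1 - q) ^ (N - 1))
            + (1 - (1 - q) ^ (N - 1)) / (1 - ε * (1 - q) ^ (N - 1)) *
                ((K : ℝ) - ε * (1 - q) ^ (N - 1) *
                    (1 - (ε * (1 - q) ^ (N - 1)) ^ K) / (1 - ε * (1 - q) ^ (N - 1))))
      ∧ (1 - ε) * ((1 - q) ^ ((N - 1) * K) / (1 + q) ^ (N - 1)) *
          ((1 - ε ^ (K + 1) * (1 - q) ^ ((N - 1) * (K + 1))) / (1 - ε * (1 - q) ^ (N - 1))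
            + (1 - (1 - q) ^ (N - 1)) / (1 - ε * (1 - q) ^ (N - 1)) *
                ((K : ℝ) - ε * (1 - q) ^ (N - 1) *
                    (1 - (ε * (1 - q) ^ (N - 1)) ^ K) / (1 - ε * (1 - q) ^ (N - 1))))
        ≤ 1 := by
  have hm1 : 1 ≤ N - 1 := by omega
  set m := N - 1 with hm
  have hq' : (0:ℝ) ≤ 1 - q := by linarith
  set r := (1 - q) ^ m with hrdef
  have hr0 : 0 ≤ r := pow_nonneg hq' m
  have hr1 : r < 1 := pow_lt_one₀ hq' (by linarith) (by omega)
  set a := ε * r with hadef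
  have ha0 : 0 ≤ a := mul_nonneg hε0 hr0
  have haε : a ≤ ε := by
    calc a = ε * r := rfl
    _ ≤ ε * 1 := by nlinarith
    _ = ε := by ring
  have ha1 : a < 1 := lt_of_le_of_lt haε hε1
  have h1a : (0:ℝ) < 1 - a := by linarith
  have hQ0 : (0:ℝ) < (1 + q) ^ m := pow_pos (by linarith) m
  have hQ1 : (1:ℝ) ≤ (1 + q) ^ m := one_le_pow₀ (by linarith)
  have e1 : (1 - q) ^ (m * K) = r ^ K := by rw [hrdef, ← pow_mul]
  have e2 : ε ^ (K + 1) * (1 - q) ^ (m * (K + 1)) = a ^ (K + 1) := by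
    rw [hadef, hrdef, mul_pow, ← pow_mul]
  rw [e1, e2]
  -- abbreviations
  have hrK0 : 0 ≤ r ^ K := pow_nonneg hr0 K
  have hrK1 : r ^ K ≤ 1 := pow_le_one₀ hr0 hr1.le
  have haK1 : a ^ (K + 1) ≤ 1 := pow_le_one₀ ha0 ha1.le
  have haK1' : a ^ K ≤ 1 := pow_le_one₀ ha0 ha1.le
  have haK0 : 0 ≤ a ^ K := pow_nonneg ha0 K
  -- S := a * (1 - a^K) / (1 - a) satisfies 0 ≤ S ≤ K
  have hSnn : 0 ≤ a * (1 - a ^ K) / (1 - a) :=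
    div_nonneg (mul_nonneg ha0 (by linarith)) h1a.le
  have hBern : 1 - a ^ K ≤ K * (1 - a) := by
    have := one_add_mul_le_pow (a := a - 1) (by linarith) K
    have h' : 1 + (K : ℝ) * (a - 1) ≤ a ^ K := by
      simpa using this
    nlinarith
  have hSK : a * (1 - a ^ K) / (1 - a) ≤ K := by
    rw [div_le_iff₀ h1a]
    nlinarith
  have hP0 : 0 ≤ (1 - ε) * (r ^ K / (1 + q) ^ m) :=
    mul_nonneg (by linarith) (div_nonneg hrK0 hQ0.le)
  -- the bracket B
  have hB0 : 0 ≤ (1 - a ^ (K + 1)) / (1 - a)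
      + (1 - r) / (1 - a) * ((K : ℝ) - a * (1 - a ^ K) / (1 - a)) := by
    have h1 : 0 ≤ (1 - a ^ (K + 1)) / (1 - a) := div_nonneg (by linarith) h1a.le
    have h2 : 0 ≤ (1 - r) / (1 - a) := div_nonneg (by linarith) h1a.le
    nlinarith [mul_nonneg h2 (sub_nonneg.mpr hSK)]
  constructor
  · exact mul_nonneg hP0 hB0
  · have hRHS : (1 + (1 - r) * (K : ℝ)) / (1 - a)
        = 1 / (1 - a) + (1 - r) / (1 - a) * (K : ℝ) := by ring
    have hBle : (1 - a ^ (K + 1)) / (1 - a)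
        + (1 - r) / (1 - a) * ((K : ℝ) - a * (1 - a ^ K) / (1 - a))
        ≤ (1 + (1 - r) * (K : ℝ)) / (1 - a) := by
      rw [hRHS]
      have hd : (0:ℝ) ≤ (1 - r) / (1 - a) :=
        div_nonneg (by linarith) h1a.le
      gcongr <;> linarith [pow_nonneg ha0 (K + 1), hSnn, hd]
    have hT : r ^ K * (1 + (1 - r) * (K : ℝ)) ≤ 1 := aux_pow_bound r hr0 hr1.le K
    have hT0 : 0 ≤ 1 + (1 - r) * (K : ℝ) := by
      have : (0:ℝ) ≤ (K : ℝ) := Nat.cast_nonneg K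
      nlinarith
    calc (1 - ε) * (r ^ K / (1 + q) ^ m) *
          ((1 - a ^ (K + 1)) / (1 - a)
            + (1 - r) / (1 - a) * ((K : ℝ) - a * (1 - a ^ K) / (1 - a)))
        ≤ (1 - ε) * (r ^ K / (1 + q) ^ m) * ((1 + (1 - r) * (K : ℝ)) / (1 - a)) :=
          mul_le_mul_of_nonneg_left hBle hP0
      _ = (1 - ε) * ((r ^ K * (1 + (1 - r) * (K : ℝ))) / ((1 + q) ^ m * (1 - a))) := by
          rw [mul_assoc, div_mul_div_comm]
      _ = ((1 - ε) * (r ^ K * (1 + (1 - r) * (K : ℝ)))) / ((1 + q) ^ m * (1 - a)) :=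
          (mul_div_assoc _ _ _).symm
      _ ≤ 1 := by
          rw [div_le_one (by positivity)]
          nlinarith [mul_nonneg hrK0 hT0]
end
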